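/- The probability that the team with home-field advantage wins a best-of-5 series in the 2-3 format equals the probability it wins in the 2-2-1 format, for all p ∈ [0,1] and r with 0 ≤ rp ≤ 1. -/

import Mathlib

/-!
Winning the series means winning at least three of the five games when all of them are played
out, and the law of the number of wins is invariant under reordering the games. Both formats
schedule three home and two road games, so one schedule is a permutation of the other.
-/

open Finset

/-- Per-game win probability for the team with home-field advantage:
`p` for a home game, `r*p` for a road game. -/
def gameProb (p r : ℝ) (home : Bool) : ℝ := if home then p else r * p

/-- Probability of a full sequence of outcomes `ω` (`true` = the team wins that game),
given the home/road schedule `sched` (`true` = home game), with games independent. -/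
def outcomeProb {n : ℕ} (p r : ℝ) (sched : Fin n → Bool) (ω : Fin n → Bool) : ℝ :=
  ∏ i, if ω i then gameProb p r (sched i) else 1 - gameProb p r (sched i)

/-- Probability that the team wins at least `k` of the `n` games; for a best-of-`n`
series (`n = 2k-1`) this equals the probability of winning the series, since the
series is decided as soon as one team reaches `k` wins. -/
def seriesWinProb {n : ℕ} (p r : ℝ) (sched : Fin n → Bool) (k : ℕ) : ℝ :=
  ∑ ω ∈ Finset.univ.filter
      (fun ω : Fin n → Bool => k ≤ (Finset.univ.filter (fun i => ω i = true)).card),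
    outcomeProb p r sched ω

section Reindex

variable {n : ℕ} (σ : Equiv.Perm (Fin n))

theorem outcomeProb_comp_perm (p r : ℝ) (sched ω : Fin n → Bool) :
    outcomeProb p r (sched ∘ σ) (ω ∘ σ) = outcomeProb p r sched ω :=
  Equiv.prod_comp σ fun i => if ω i then gameProb p r (sched i) else 1 - gameProb p r (sched i)

theorem card_filter_comp_perm (ω : Fin n → Bool) :
    #{i | (ω ∘ σ) i = true} = #{i | ω i = true} := by
  simp only [card_filter]
  exact Equiv.sum_comp σ fun i => if ω i = true then 1 else 0

theorem seriesWinProb_comp_perm (p r : ℝ) (sched : Fin n → Bool) (k : ℕ) :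
    seriesWinProb p r (sched ∘ σ) k = seriesWinProb p r sched k := by
  simp only [seriesWinProb, sum_filter]
  symm
  refine Fintype.sum_equiv (σ.symm.arrowCongr (Equiv.refl Bool)) _ _ fun ω => ?_
  have hω : σ.symm.arrowCongr (Equiv.refl Bool) ω = ω ∘ σ := rfl
  rw [hω, card_filter_comp_perm, outcomeProb_comp_perm]

end Reindex

theorem stmt_5_general (p r : ℝ) :
    seriesWinProb p r ![false, false, true, true, true] 3 =
      seriesWinProb p r ![true, true, false, false, true] 3 := by
  have hperm : ![true, true, false, false, true] =
      ![false, false, true, true, true] ∘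
        (Equiv.swap 0 2 * Equiv.swap 1 3 : Equiv.Perm (Fin 5)) := by
    decide
  rw [hperm, seriesWinProb_comp_perm]

/-- The best-of-5 win probability for the team with home-field advantage is the same
in the 2-3 format (games 1,2 away; 3,4,5 home) and the 2-2-1 format
(games 1,2,5 home; 3,4 away). -/
theorem stmt_5 (p r : ℝ) (hp0 : 0 ≤ p) (hp1 : p ≤ 1) (hr0 : 0 ≤ r * p) (hrp : r * p ≤ 1) :
    seriesWinProb p r ![false, false, true, true, true] 3 =
      seriesWinProb p r ![true, true, false, false, true] 3 :=
  stmt_5_general p r
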